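/- For all v, w ∈ W, the set {xq : x, q ∈ W, x ≤ v, q ≤ w} has a maximum element in the Bruhat order, and this maximum equals the Demazure product v * w. -/

import Mathlib

open scoped Classical

/-- Data of a root system with a fixed choice of simple roots: an ambient
`ℚ`-vector space `V`, a set of roots `Φ` with a distinguished subset `pos` of
positive roots, a coroot functional `coroot β = ⟨·, β^∨⟩` for each root, and
simple roots `α 1, …, α r`. -/
structure RootData where
  r : ℕ
  V : Type
  [grp : AddCommGroup V]
  [mod : Module ℚ V]
  Φ : Set V
  pos : Set V
  coroot : V → Module.Dual ℚ V
  α : Fin r → V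

attribute [instance] RootData.grp RootData.mod

namespace RootData

variable (R : RootData)

/-- The group of linear automorphisms of `V`, in which the Weyl group lives. -/
abbrev Aut : Type := R.V ≃ₗ[ℚ] R.V

/-- The linear map `v ↦ v - ⟨v, β^∨⟩ β`. -/
noncomputable def reflMap (β : R.V) : R.V →ₗ[ℚ] R.V :=
  LinearMap.id - (R.coroot β).smulRight β

/-- The reflection `s_β` associated to a root `β`, as a linear automorphism. -/
noncomputable def s (β : R.V) : R.Aut :=
  if h : (R.reflMap β).comp (R.reflMap β) = LinearMap.id then
    LinearEquiv.ofLinear (R.reflMap β) (R.reflMap β) h h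
  else LinearEquiv.refl ℚ R.V

/-- The simple reflections `s_i := s_{α_i}`. -/
noncomputable def S (i : Fin R.r) : R.Aut := R.s (R.α i)

/-- The Weyl group `W`, generated by the simple reflections. -/
noncomputable def weylGroup : Subgroup R.Aut := Subgroup.closure (Set.range R.S)

/-- The product `s_{i_1} ⋯ s_{i_k}` of a word in the simple reflections. -/
noncomputable def wordProd (l : List (Fin R.r)) : R.Aut := (l.map R.S).prod

/-- The length function on `W`: least length of a word in the simple
reflections expressing the given element. -/
noncomputable def len (w : R.Aut) : ℕ :=
  sInf {n | ∃ l : List (Fin R.r), l.length = n ∧ R.wordProd l = w}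

/-- A word is reduced if its length equals the length of its product. -/
def Reduced (l : List (Fin R.r)) : Prop := R.len (R.wordProd l) = l.length

/-- The Bruhat order on `W`: `u ≤ w` iff some reduced word for `w` has a
subword whose product is `u`. -/
def BruhatLE (u w : R.Aut) : Prop :=
  ∃ l : List (Fin R.r), R.Reduced l ∧ R.wordProd l = w ∧
    ∃ l' : List (Fin R.r), l'.Sublist l ∧ R.wordProd l' = u

/-- Strict Bruhat order. -/
def BruhatLT (u w : R.Aut) : Prop := R.BruhatLE u w ∧ u ≠ w

/-- One step of the Demazure product: `s_i * w := max {w, s_i w}`. -/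
noncomputable def dmulStep (i : Fin R.r) (x : R.Aut) : R.Aut :=
  if R.len x < R.len (R.S i * x) then R.S i * x else x

/-- Demazure product of a word in the simple reflections against `w`:
`s_{i_1} * (s_{i_2} * (⋯ * (s_{i_k} * w)))`. -/
noncomputable def dmulList (l : List (Fin R.r)) (w : R.Aut) : R.Aut :=
  l.foldr R.dmulStep w

/-- The Demazure product `v * w` on the Weyl group, computed by choosing a
reduced word for `v` (it is independent of this choice). -/
noncomputable def dmul (v w : R.Aut) : R.Aut :=
  if h : ∃ l : List (Fin R.r), R.Reduced l ∧ R.wordProd l = v then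
    R.dmulList h.choose w
  else v * w

/-- The parabolic subgroup `W_{P_i}` generated by the simple reflections
`s_j`, `j ≠ i`. -/
noncomputable def WPar (i : Fin R.r) : Subgroup R.Aut :=
  Subgroup.closure (R.S '' {j | j ≠ i})

/-- `W^{P_i}`: the set of minimal-length representatives of cosets of
`W/W_{P_i}`. -/
def minReps (i : Fin R.r) : Set R.Aut :=
  {v | v ∈ R.weylGroup ∧ ∀ p ∈ R.WPar i, R.len v ≤ R.len (v * p)}

/-- `u` is the minimal-length representative of the coset `w W_{P_i}`. -/
def IsMinRep (i : Fin R.r) (u w : R.Aut) : Prop :=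
  u ∈ R.minReps i ∧ u⁻¹ * w ∈ R.WPar i

/-- A weight is dominant if it pairs nonnegatively with every simple coroot. -/
def Dominant (lam : R.V) : Prop := ∀ i : Fin R.r, 0 ≤ R.coroot (R.α i) lam

/-- The dual action of the Weyl group on `V* `: `(u f)(v) = f(u⁻¹ v)`. -/
noncomputable def dualAct (u : R.Aut) (f : Module.Dual ℚ R.V) : Module.Dual ℚ R.V :=
  f.comp (u.symm : R.V →ₗ[ℚ] R.V)

/-- The Demazure polytope `P_λ^w := conv {uλ : u ∈ W, u ≤ w}`. -/
noncomputable def demPolytope (lam : R.V) (w : R.Aut) : Set R.V :=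
  convexHull ℚ {m | ∃ u : R.Aut, u ∈ R.weylGroup ∧ R.BruhatLE u w ∧ m = u lam}

/-- Membership in the weight lattice `X`. -/
def IsWeight (lam : R.V) : Prop := ∀ β ∈ R.Φ, ∃ m : ℤ, R.coroot β lam = (m : ℚ)

/-- The root lattice `Q = ℤΦ`. -/
noncomputable def rootLattice : AddSubgroup R.V := AddSubgroup.closure R.Φ

/-- `w₀` is the longest element of the Weyl group. -/
def IsLongest (w₀ : R.Aut) : Prop :=
  w₀ ∈ R.weylGroup ∧ ∀ g ∈ R.weylGroup, R.len g ≤ R.len w₀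

/-- The positive roots `Φ_{P_i}⁺ = Φ⁺ ∩ span {α_j : j ≠ i}` of the standard
Levi subsystem. -/
def parPos (i : Fin R.r) : Set R.V :=
  {η | η ∈ R.pos ∧ η ∈ Submodule.span ℚ (R.α '' {j | j ≠ i})}

/-- The value `D_i (e^λ)` of the Demazure operator on a basis element of the
group ring `ℤ[X]`. -/
noncomputable def demOnBasis (i : Fin R.r) (lam : R.V) : R.V →₀ ℤ :=
  if 0 ≤ ⌊R.coroot (R.α i) lam⌋ then
    ∑ k ∈ Finset.range (⌊R.coroot (R.α i) lam⌋.toNat + 1),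
      Finsupp.single (lam - (k : ℚ) • R.α i) 1
  else if ⌊R.coroot (R.α i) lam⌋ = -1 then 0
  else - ∑ k ∈ Finset.range ((-⌊R.coroot (R.α i) lam⌋).toNat - 1),
      Finsupp.single (lam + ((k : ℚ) + 1) • R.α i) 1

/-- The Demazure operator `D_i`, as a `ℤ`-linear endomorphism of the group
ring `ℤ[X]` (realized as finitely supported functions `V →₀ ℤ`). -/
noncomputable def demOp (i : Fin R.r) : (R.V →₀ ℤ) →ₗ[ℤ] (R.V →₀ ℤ) :=
  Finsupp.lsum ℤ fun lam => LinearMap.toSpanSingleton ℤ (R.V →₀ ℤ) (R.demOnBasis i lam)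

/-- The Demazure character `D_{i_1} ⋯ D_{i_k} (e^λ)`. -/
noncomputable def demChar (l : List (Fin R.r)) (lam : R.V) : R.V →₀ ℤ :=
  l.foldr (fun i p => R.demOp i p) (Finsupp.single lam 1)

/-- The axioms of a finite crystallographic root system spanning `V`, with
simple roots `α_i` and positive roots `pos`. -/
structure IsRootSystem (R : RootData) : Prop where
  finite : R.Φ.Finite
  span_top : Submodule.span ℚ R.Φ = ⊤
  ne_zero : ∀ β ∈ R.Φ, β ≠ 0
  coroot_self : ∀ β ∈ R.Φ, R.coroot β β = 2
  crystallographic : ∀ β ∈ R.Φ, ∀ γ ∈ R.Φ, ∃ m : ℤ, R.coroot β γ = (m : ℚ)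
  reflection_stable : ∀ β ∈ R.Φ, ∀ γ ∈ R.Φ, γ - R.coroot β γ • β ∈ R.Φ
  simple_mem : ∀ i, R.α i ∈ R.Φ
  indep : LinearIndependent ℚ R.α
  pos_subset : R.pos ⊆ R.Φ
  pos_or_neg : ∀ β ∈ R.Φ, (β ∈ R.pos ∧ -β ∉ R.pos) ∨ (β ∉ R.pos ∧ -β ∈ R.pos)
  simple_pos : ∀ i, R.α i ∈ R.pos
  pos_nonneg_comb : ∀ β ∈ R.pos, ∃ c : Fin R.r → ℚ, (∀ i, 0 ≤ c i) ∧ β = ∑ i, c i • R.α i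

end RootData

/-!
Work with the reflection order, generated by the steps `x = s_β y` with `β > 0` and
`y⁻¹ β < 0`. By the exchange condition every such chain below `w` is realised inside every
word for `w`. Conversely, Deodhar's property Z, proved along chains, shows that for every word
`n` the products of subwords of `n` lie below the Demazure product of `n`; for a reduced word
this product is the word's value, so the reflection order agrees with the subword order of
every reduced word. Now take `n` a reduced word for `v` followed by one for `w`: its Demazure
product is `v * w`, the products `x q` with `x ≤ v`, `q ≤ w` are the products of subwords of
`n`, and the Demazure product of `n` is itself one of them.
-/

namespace RootData

variable {R : RootData}

section Words

@[simp] lemma wordProd_nil : R.wordProd [] = 1 := rfl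

@[simp] lemma wordProd_cons (i : Fin R.r) (l : List (Fin R.r)) :
    R.wordProd (i :: l) = R.S i * R.wordProd l := by
  simp [wordProd]

lemma wordProd_append (a b : List (Fin R.r)) :
    R.wordProd (a ++ b) = R.wordProd a * R.wordProd b := by
  simp [wordProd]

lemma S_mem (i : Fin R.r) : R.S i ∈ R.weylGroup := Subgroup.subset_closure ⟨i, rfl⟩

lemma wordProd_mem (l : List (Fin R.r)) : R.wordProd l ∈ R.weylGroup :=
  R.weylGroup.list_prod_mem <| by
    rintro _ hx
    obtain ⟨i, -, rfl⟩ := List.mem_map.1 hx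
    exact S_mem i

lemma len_wordProd_le (l : List (Fin R.r)) : R.len (R.wordProd l) ≤ l.length :=
  Nat.sInf_le ⟨l, rfl, rfl⟩

end Words

section Reflections

lemma s_apply {β : R.V} (hβ : R.coroot β β = 2) (v : R.V) :
    R.s β v = v - R.coroot β v • β := by
  have hinv : (R.reflMap β).comp (R.reflMap β) = LinearMap.id := by
    ext v
    simp only [reflMap, LinearMap.comp_apply, LinearMap.sub_apply, LinearMap.id_apply,
      LinearMap.smulRight_apply, map_sub, map_smul, hβ]
    module
  rw [s, dif_pos hinv]
  simp [reflMap]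

lemma s_mul_self {β : R.V} (hβ : R.coroot β β = 2) : R.s β * R.s β = 1 := by
  refine LinearEquiv.ext fun v => ?_
  show R.s β (R.s β v) = v
  simp only [s_apply hβ, map_sub, map_smul, hβ, smul_eq_mul]
  module

variable (hR : R.IsRootSystem)
include hR

lemma S_apply (i : Fin R.r) (v : R.V) : R.S i v = v - R.coroot (R.α i) v • R.α i :=
  s_apply (hR.coroot_self _ (hR.simple_mem i)) v

lemma S_apply_simple (i : Fin R.r) : R.S i (R.α i) = -R.α i := by
  rw [S_apply hR, hR.coroot_self _ (hR.simple_mem i)]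
  module

lemma S_mul_S (i : Fin R.r) : R.S i * R.S i = 1 :=
  s_mul_self (hR.coroot_self _ (hR.simple_mem i))

lemma S_inv (i : Fin R.r) : (R.S i)⁻¹ = R.S i :=
  inv_eq_of_mul_eq_one_right (S_mul_S hR i)

lemma exists_wordProd_eq {w : R.Aut} (hw : w ∈ R.weylGroup) :
    ∃ l : List (Fin R.r), R.wordProd l = w := by
  induction hw using Subgroup.closure_induction'' with
  | mem _ h => obtain ⟨i, rfl⟩ := h; exact ⟨[i], by simp⟩
  | inv_mem _ h => obtain ⟨i, rfl⟩ := h; exact ⟨[i], by simp [S_inv hR]⟩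
  | one => exact ⟨[], rfl⟩
  | mul _ _ _ _ hx hy =>
    obtain ⟨a, rfl⟩ := hx
    obtain ⟨b, rfl⟩ := hy
    exact ⟨a ++ b, wordProd_append a b⟩

lemma s_apply_mem_Φ {β γ : R.V} (hβ : β ∈ R.Φ) (hγ : γ ∈ R.Φ) : R.s β γ ∈ R.Φ := by
  rw [s_apply (hR.coroot_self β hβ)]
  exact hR.reflection_stable β hβ γ hγ

lemma apply_mem_Φ {w : R.Aut} (hw : w ∈ R.weylGroup) {γ : R.V} (hγ : γ ∈ R.Φ) :
    w γ ∈ R.Φ := by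
  obtain ⟨l, rfl⟩ := exists_wordProd_eq hR hw
  induction l with
  | nil => exact hγ
  | cons i l ih => exact s_apply_mem_Φ hR (hR.simple_mem i) (ih (wordProd_mem l))

end Reflections

section Uniqueness

variable (hR : R.IsRootSystem)
include hR

/-- If `f β ≠ ⟨β, γ^∨⟩`, composing the reflections along `f` and `γ^∨` translates `β`
by the nonzero multiple `(⟨β, γ^∨⟩ - f β) γ`, producing infinitely many roots. -/
lemma eq_coroot_of_sub_smul_mem {γ : R.V} (hγ : γ ∈ R.Φ) {f : Module.Dual ℚ R.V}
    (hfγ : f γ = 2) (hf : ∀ β ∈ R.Φ, β - f β • γ ∈ R.Φ) : f = R.coroot γ := by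
  refine LinearMap.ext_on hR.span_top fun β hβ => ?_
  by_contra hne
  set d := R.coroot γ β - f β
  have hd : d ≠ 0 := sub_ne_zero.2 (Ne.symm hne)
  have hmem : ∀ n : ℕ, β + ((n : ℚ) * d) • γ ∈ R.Φ := by
    intro n
    induction n with
    | zero => simpa using hβ
    | succ n ih =>
      have h := hf _ (hR.reflection_stable γ hγ _ ih)
      convert h using 1
      simp only [d, map_add, map_sub, map_smul, smul_eq_mul, hfγ, hR.coroot_self γ hγ]
      push_cast
      module
  have hinj : Function.Injective fun n : ℕ => β + ((n : ℚ) * d) • γ := by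
    intro m n hmn
    have h := smul_left_injective ℚ (hR.ne_zero γ hγ) (add_left_cancel hmn)
    exact_mod_cast mul_right_cancel₀ hd h
  exact Set.infinite_of_injective_forall_mem hinj hmem hR.finite

lemma s_eq_of_eq_smul {β γ : R.V} (hβ : β ∈ R.Φ) (hγ : γ ∈ R.Φ) {q : ℚ} (h : β = q • γ) :
    R.s β = R.s γ := by
  have hcoroot : q • R.coroot β = R.coroot γ := by
    refine eq_coroot_of_sub_smul_mem hR hγ ?_ fun δ hδ => ?_
    · rw [LinearMap.smul_apply, smul_eq_mul, ← smul_eq_mul, ← map_smul, ← h]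
      exact hR.coroot_self β hβ
    · convert hR.reflection_stable β hβ δ hδ using 2
      rw [h, LinearMap.smul_apply, smul_smul, smul_eq_mul, mul_comm]
  refine LinearEquiv.ext fun v => ?_
  rw [s_apply (hR.coroot_self β hβ), s_apply (hR.coroot_self γ hγ), ← hcoroot, h,
    LinearMap.smul_apply, smul_smul, smul_eq_mul, mul_comm]

lemma s_conj {w : R.Aut} (hw : w ∈ R.weylGroup) {β : R.V} (hβ : β ∈ R.Φ) :
    R.s (w β) = w * R.s β * w⁻¹ := by
  have hwβ := apply_mem_Φ hR hw hβ
  have hcoroot : (R.coroot β).comp (w⁻¹ : R.Aut).toLinearMap = R.coroot (w β) := by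
    refine eq_coroot_of_sub_smul_mem hR hwβ ?_ fun δ hδ => ?_
    · simpa using hR.coroot_self β hβ
    · have h := apply_mem_Φ hR hw
        (hR.reflection_stable β hβ _ (apply_mem_Φ hR (inv_mem hw) hδ))
      simpa using h
  refine LinearEquiv.ext fun v => ?_
  show R.s (w β) v = w (R.s β (w⁻¹ v))
  rw [s_apply (hR.coroot_self _ hwβ), s_apply (hR.coroot_self β hβ), ← hcoroot]
  simp

end Uniqueness

section Positivity

variable (hR : R.IsRootSystem)
include hR

lemma mem_pos_or_neg_mem_pos {β : R.V} (hβ : β ∈ R.Φ) : β ∈ R.pos ∨ -β ∈ R.pos :=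
  (hR.pos_or_neg β hβ).imp And.left And.right

lemma neg_notMem_pos {β : R.V} (hβ : β ∈ R.pos) : -β ∉ R.pos :=
  ((hR.pos_or_neg β (hR.pos_subset hβ)).resolve_right fun h => h.1 hβ).2

/-- A positive root made non-positive by `s_i` is a multiple of `α_i`. -/
lemma s_eq_S_of_S_apply_notMem_pos {β : R.V} (hβ : β ∈ R.pos) {i : Fin R.r}
    (h : R.S i β ∉ R.pos) : R.s β = R.S i := by
  have hSβ : -(R.S i β) ∈ R.pos := (mem_pos_or_neg_mem_pos hR
    (s_apply_mem_Φ hR (hR.simple_mem i) (hR.pos_subset hβ))).resolve_left h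
  obtain ⟨c, hc, hβc⟩ := hR.pos_nonneg_comb β hβ
  obtain ⟨d, hd, hSβd⟩ := hR.pos_nonneg_comb _ hSβ
  have hsum : ∑ j, (c + d) j • R.α j =
      ∑ j, (Pi.single i (R.coroot (R.α i) β) : Fin R.r → ℚ) j • R.α j := by
    simp only [Pi.single_apply, ite_smul, zero_smul, Finset.sum_ite_eq', Finset.mem_univ,
      if_true, Pi.add_apply, add_smul, Finset.sum_add_distrib, ← hβc, ← hSβd, S_apply hR]
    abel
  have hcoeff := Fintype.linearIndependent_iffₛ.1 hR.indep _ _ hsum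
  have hc0 : ∀ j ≠ i, c j = 0 := fun j hj => by
    have := hcoeff j
    simp only [Pi.add_apply, Pi.single_eq_of_ne hj] at this
    linarith [hc j, hd j]
  have hβi : β = c i • R.α i := by
    rw [hβc, Fintype.sum_eq_single i fun j hj => by simp [hc0 j hj]]
  exact s_eq_of_eq_smul hR (hR.pos_subset hβ) (hR.simple_mem i) hβi

end Positivity

section Length

variable (hR : R.IsRootSystem)
include hR

lemma exists_reduced {w : R.Aut} (hw : w ∈ R.weylGroup) :
    ∃ l : List (Fin R.r), R.Reduced l ∧ R.wordProd l = w := by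
  obtain ⟨l₀, hl₀⟩ := exists_wordProd_eq hR hw
  obtain ⟨l, hlen, hl⟩ := Nat.sInf_mem (s := {n | ∃ l : List (Fin R.r), l.length = n ∧
    R.wordProd l = w}) ⟨l₀.length, l₀, rfl, hl₀⟩
  exact ⟨l, by rw [Reduced, hl, hlen]; rfl, hl⟩

lemma len_S_mul_le {w : R.Aut} (hw : w ∈ R.weylGroup) (i : Fin R.r) :
    R.len (R.S i * w) ≤ R.len w + 1 := by
  obtain ⟨l, hl, rfl⟩ := exists_reduced hR hw
  rw [show R.len (R.wordProd l) = l.length from hl]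
  simpa using len_wordProd_le (i :: l)

/-- The strong exchange condition. -/
lemma exists_s_mul_wordProd_eq_eraseIdx (l : List (Fin R.r)) {β : R.V} (hβ : β ∈ R.pos)
    (h : -((R.wordProd l)⁻¹ β) ∈ R.pos) :
    ∃ k < l.length, R.s β * R.wordProd l = R.wordProd (l.eraseIdx k) := by
  induction l generalizing β with
  | nil => exact absurd h (by simpa using neg_notMem_pos hR hβ)
  | cons i l ih =>
    by_cases hSβ : R.S i β ∈ R.pos
    · obtain ⟨k, hk, hl⟩ := ih hSβ (by simpa [mul_inv_rev, S_inv hR] using h)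
      refine ⟨k + 1, by simpa using hk, ?_⟩
      have hconj := s_conj hR (S_mem i) (hR.pos_subset hβ)
      rw [S_inv hR] at hconj
      calc R.s β * R.wordProd (i :: l)
          = R.S i * (R.S i * R.s β * R.S i) * R.wordProd l := by
            simp [← mul_assoc, S_mul_S hR]
        _ = R.wordProd ((i :: l).eraseIdx (k + 1)) := by simp [← hconj, mul_assoc, hl]
    · refine ⟨0, by simp, ?_⟩
      simp [s_eq_S_of_S_apply_notMem_pos hR hβ hSβ, ← mul_assoc, S_mul_S hR]

lemma len_s_mul_lt {w : R.Aut} (hw : w ∈ R.weylGroup) {β : R.V} (hβ : β ∈ R.pos)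
    (h : -(w⁻¹ β) ∈ R.pos) : R.len (R.s β * w) < R.len w := by
  obtain ⟨l, hl, rfl⟩ := exists_reduced hR hw
  obtain ⟨k, hk, heq⟩ := exists_s_mul_wordProd_eq_eraseIdx hR l hβ h
  have := len_wordProd_le (l.eraseIdx k)
  rw [List.length_eraseIdx_of_lt hk, ← heq] at this
  rw [hl]
  omega

lemma S_mul_inv_apply_simple (w : R.Aut) (i : Fin R.r) :
    (R.S i * w)⁻¹ (R.α i) = -(w⁻¹ (R.α i)) := by
  rw [mul_inv_rev, S_inv hR, LinearEquiv.mul_apply, S_apply_simple hR, map_neg]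

lemma len_lt_len_S_mul {w : R.Aut} (hw : w ∈ R.weylGroup) {i : Fin R.r}
    (h : w⁻¹ (R.α i) ∈ R.pos) : R.len w < R.len (R.S i * w) := by
  have := len_s_mul_lt hR (mul_mem (S_mem i) hw) (hR.simple_pos i)
    (by rwa [S_mul_inv_apply_simple hR, neg_neg])
  rwa [← S, ← mul_assoc, S_mul_S hR, one_mul] at this

lemma len_S_mul_lt_iff {w : R.Aut} (hw : w ∈ R.weylGroup) (i : Fin R.r) :
    R.len (R.S i * w) < R.len w ↔ -(w⁻¹ (R.α i)) ∈ R.pos := by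
  refine ⟨fun h => ?_, len_s_mul_lt hR hw (hR.simple_pos i)⟩
  refine (mem_pos_or_neg_mem_pos hR (apply_mem_Φ hR (inv_mem hw) (hR.simple_mem i))).resolve_left
    fun hpos => ?_
  have := len_lt_len_S_mul hR hw hpos
  omega

lemma len_S_mul_lt_or_lt {w : R.Aut} (hw : w ∈ R.weylGroup) (i : Fin R.r) :
    R.len (R.S i * w) < R.len w ∨ R.len w < R.len (R.S i * w) :=
  (mem_pos_or_neg_mem_pos hR (apply_mem_Φ hR (inv_mem hw) (hR.simple_mem i))).symm.imp
    (len_S_mul_lt_iff hR hw i).2 (len_lt_len_S_mul hR hw)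

lemma Reduced.of_cons {i : Fin R.r} {l : List (Fin R.r)} (h : R.Reduced (i :: l)) :
    R.Reduced l ∧ R.len (R.wordProd l) < R.len (R.S i * R.wordProd l) := by
  have hle := len_S_mul_le hR (wordProd_mem l) i
  have hl := len_wordProd_le l
  have hcons : R.len (R.S i * R.wordProd l) = l.length + 1 := by
    simpa [Reduced] using h
  exact ⟨by unfold Reduced; omega, by omega⟩

end Length

def ReflectionStep (R : RootData) (x y : R.Aut) : Prop :=
  ∃ β ∈ R.pos, x = R.s β * y ∧ -(y⁻¹ β) ∈ R.pos

def ReflectionLE (R : RootData) : R.Aut → R.Aut → Prop :=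
  Relation.ReflTransGen R.ReflectionStep

section ReflectionOrder

variable (hR : R.IsRootSystem)
include hR

lemma ReflectionStep.exists_sublist {x y : R.Aut} (h : R.ReflectionStep x y)
    {l : List (Fin R.r)} (hl : R.wordProd l = y) :
    ∃ l' : List (Fin R.r), l'.Sublist l ∧ R.wordProd l' = x := by
  obtain ⟨β, hβ, rfl, hneg⟩ := h
  subst hl
  obtain ⟨k, -, heq⟩ := exists_s_mul_wordProd_eq_eraseIdx hR l hβ hneg
  exact ⟨l.eraseIdx k, List.eraseIdx_sublist l k, heq.symm⟩

lemma ReflectionLE.exists_sublist {x y : R.Aut} (h : R.ReflectionLE x y)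
    {l : List (Fin R.r)} (hl : R.wordProd l = y) :
    ∃ l' : List (Fin R.r), l'.Sublist l ∧ R.wordProd l' = x := by
  induction h using Relation.ReflTransGen.head_induction_on with
  | refl => exact ⟨l, List.Sublist.refl l, hl⟩
  | head hstep _ ih =>
    obtain ⟨l', hsub, hl'⟩ := ih
    obtain ⟨l'', hsub', hl''⟩ := hstep.exists_sublist hR hl'
    exact ⟨l'', hsub'.trans hsub, hl''⟩

lemma ReflectionStep.mem {x y : R.Aut} (h : R.ReflectionStep x y) (hy : y ∈ R.weylGroup) :
    x ∈ R.weylGroup := by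
  obtain ⟨l, hl⟩ := exists_wordProd_eq hR hy
  obtain ⟨l', -, rfl⟩ := h.exists_sublist hR hl
  exact wordProd_mem l'

lemma ReflectionStep.len_lt {x y : R.Aut} (h : R.ReflectionStep x y) (hy : y ∈ R.weylGroup) :
    R.len x < R.len y := by
  obtain ⟨β, hβ, rfl, hneg⟩ := h
  exact len_s_mul_lt hR hy hβ hneg

lemma reflectionStep_S_mul_self {w : R.Aut} (hw : w ∈ R.weylGroup) {i : Fin R.r}
    (h : R.len (R.S i * w) < R.len w) : R.ReflectionStep (R.S i * w) w :=
  ⟨R.α i, hR.simple_pos i, rfl, (len_S_mul_lt_iff hR hw i).1 h⟩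

lemma reflectionStep_self_S_mul {w : R.Aut} (hw : w ∈ R.weylGroup) {i : Fin R.r}
    (h : R.len w < R.len (R.S i * w)) : R.ReflectionStep w (R.S i * w) := by
  have hS := reflectionStep_S_mul_self hR (mul_mem (S_mem i) hw)
    (i := i) (by rwa [← mul_assoc, S_mul_S hR, one_mul])
  rwa [← mul_assoc, S_mul_S hR, one_mul] at hS

lemma ReflectionStep.S_mul {x y : R.Aut} (h : R.ReflectionStep x y) {i : Fin R.r}
    (hne : x ≠ R.S i * y) : R.ReflectionStep (R.S i * x) (R.S i * y) := by
  obtain ⟨β, hβ, rfl, hneg⟩ := h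
  have hSβ : R.S i β ∈ R.pos := by
    by_contra hSβ
    exact hne (by rw [s_eq_S_of_S_apply_notMem_pos hR hβ hSβ])
  refine ⟨R.S i β, hSβ, ?_, ?_⟩
  · rw [s_conj hR (S_mem i) (hR.pos_subset hβ), S_inv hR]
    simp [mul_assoc, ← mul_assoc (R.S i) (R.S i), S_mul_S hR]
  · rwa [mul_inv_rev, S_inv hR, ← LinearEquiv.mul_apply, mul_assoc, S_mul_S hR, mul_one]

/-- Deodhar's property Z, proved along the chain from `u` up to `w`. -/
lemma ReflectionLE.S_mul_le {u w : R.Aut} (h : R.ReflectionLE u w) (hw : w ∈ R.weylGroup)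
    (i : Fin R.r) :
    (R.len w < R.len (R.S i * w) → R.ReflectionLE (R.S i * u) (R.S i * w)) ∧
      (R.len (R.S i * w) < R.len w → R.ReflectionLE (R.S i * u) w) := by
  induction h with
  | refl => exact ⟨fun _ => .refl, fun h => .single (reflectionStep_S_mul_self hR hw h)⟩
  | @tail v w _ hstep ih =>
    have hv := hstep.mem hR hw
    have hvw := hstep.len_lt hR hw
    obtain ⟨ihv₁, ihv₂⟩ := ih hv
    rcases len_S_mul_lt_or_lt hR hv i with hvi | hvi
    · have hu := ihv₂ hvi
      exact ⟨fun hwi => (hu.tail hstep).tail (reflectionStep_self_S_mul hR hw hwi),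
        fun _ => hu.tail hstep⟩
    · have hu := ihv₁ hvi
      refine ⟨fun hwi => hu.tail (hstep.S_mul hR fun heq => ?_), fun hwi => ?_⟩
      · rw [heq] at hvw
        omega
      · by_cases heq : v = R.S i * w
        · rwa [heq, ← mul_assoc, S_mul_S hR, one_mul] at hu
        · exact (hu.tail (hstep.S_mul hR heq)).tail (reflectionStep_S_mul_self hR hw hwi)

end ReflectionOrder

section Demazure

lemma dmulList_append (a b : List (Fin R.r)) (w : R.Aut) :
    R.dmulList (a ++ b) w = R.dmulList a (R.dmulList b w) :=
  List.foldr_append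

lemma exists_sublist_wordProd_eq_dmulList (n : List (Fin R.r)) :
    ∃ n' : List (Fin R.r), n'.Sublist n ∧ R.wordProd n' = R.dmulList n 1 := by
  induction n with
  | nil => exact ⟨[], List.Sublist.slnil, rfl⟩
  | cons i n ih =>
    obtain ⟨n', hsub, hn'⟩ := ih
    simp only [dmulList, List.foldr_cons, dmulStep] at hn' ⊢
    split_ifs
    · exact ⟨i :: n', hsub.cons_cons i, by rw [wordProd_cons, hn']⟩
    · exact ⟨n', hsub.cons i, hn'⟩

variable (hR : R.IsRootSystem)
include hR

lemma reflectionLE_wordProd_dmulList {l n : List (Fin R.r)} (h : l.Sublist n) :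
    R.ReflectionLE (R.wordProd l) (R.dmulList n 1) := by
  induction n generalizing l with
  | nil =>
    rw [List.sublist_nil.1 h]
    exact .refl
  | cons i n ih =>
    have hD : R.dmulList n 1 ∈ R.weylGroup := by
      obtain ⟨n', -, hn'⟩ := exists_sublist_wordProd_eq_dmulList n
      exact hn' ▸ wordProd_mem n'
    simp only [dmulList, List.foldr_cons, dmulStep] at ih ⊢
    rcases List.sublist_cons_iff.1 h with hsub | ⟨l', rfl, hsub⟩
    · split_ifs with hi
      · exact (ih hsub).tail (reflectionStep_self_S_mul hR hD hi)
      · exact ih hsub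
    · rw [wordProd_cons]
      split_ifs with hi
      · exact ((ih hsub).S_mul_le hR hD i).1 hi
      · exact ((ih hsub).S_mul_le hR hD i).2 ((len_S_mul_lt_or_lt hR hD i).resolve_right hi)

lemma Reduced.dmulList_one {l : List (Fin R.r)} (h : R.Reduced l) :
    R.dmulList l 1 = R.wordProd l := by
  induction l with
  | nil => rfl
  | cons i l ih =>
    obtain ⟨hl, hi⟩ := h.of_cons hR
    simp only [dmulList, List.foldr_cons] at ih ⊢
    rw [ih hl, dmulStep, if_pos hi, wordProd_cons]

lemma BruhatLE.reflectionLE {x w : R.Aut} (h : R.BruhatLE x w) : R.ReflectionLE x w := by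
  obtain ⟨l, hl, rfl, l', hsub, rfl⟩ := h
  exact hl.dmulList_one hR ▸ reflectionLE_wordProd_dmulList hR hsub

lemma BruhatLE.exists_sublist {x w : R.Aut} (h : R.BruhatLE x w) {l : List (Fin R.r)}
    (hl : R.wordProd l = w) : ∃ l' : List (Fin R.r), l'.Sublist l ∧ R.wordProd l' = x :=
  (h.reflectionLE hR).exists_sublist hR hl

lemma ReflectionLE.bruhatLE {x w : R.Aut} (h : R.ReflectionLE x w) (hw : w ∈ R.weylGroup) :
    R.BruhatLE x w := by
  obtain ⟨l, hl, rfl⟩ := exists_reduced hR hw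
  obtain ⟨l', hsub, hl'⟩ := h.exists_sublist hR rfl
  exact ⟨l, hl, rfl, l', hsub, hl'⟩

end Demazure

end RootData

theorem statement5 (R : RootData) (hR : R.IsRootSystem)
    (v w : R.Aut) (hv : v ∈ R.weylGroup) (hw : w ∈ R.weylGroup) :
    (∃ x q : R.Aut, R.BruhatLE x v ∧ R.BruhatLE q w ∧ x * q = R.dmul v w) ∧
      ∀ x q : R.Aut, R.BruhatLE x v → R.BruhatLE q w →
        R.BruhatLE (x * q) (R.dmul v w) := by
  open RootData in
  have hv' := exists_reduced hR hv
  obtain ⟨hL, hLv⟩ := hv'.choose_spec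
  obtain ⟨M, hM, rfl⟩ := exists_reduced hR hw
  have hdmul : R.dmul v (R.wordProd M) = R.dmulList (hv'.choose ++ M) 1 := by
    rw [dmul, dif_pos hv', dmulList_append, hM.dmulList_one hR]
  obtain ⟨n, hn, hnD⟩ := exists_sublist_wordProd_eq_dmulList (hv'.choose ++ M)
  refine ⟨?_, fun x q hx hq => ?_⟩
  · obtain ⟨a, b, rfl, ha, hb⟩ := List.sublist_append_iff.1 hn
    exact ⟨_, _, ⟨_, hL, hLv, a, ha, rfl⟩, ⟨M, hM, rfl, b, hb, rfl⟩,
      by rw [← wordProd_append, hnD, hdmul]⟩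
  · obtain ⟨a, ha, rfl⟩ := hx.exists_sublist hR hLv
    obtain ⟨b, hb, rfl⟩ := hq.exists_sublist hR rfl
    rw [hdmul, ← wordProd_append]
    exact (reflectionLE_wordProd_dmulList hR (ha.append hb)).bruhatLE hR (hnD ▸ wordProd_mem n)
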